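/- Under the assumptions of the lower-bound lemma (A has RIP constant δ of order K, and r_K + s_K/√K < 1/κ where r_K = ‖x_{K^c}‖₂/‖x_K‖₂, s_K = ‖x_{K^c}‖₁/‖x_K‖₂, κ = √(1+δ)/√(1-δ)), and if ‖Ev‖₂ ≤ ε^{(K)}·√(1+δ)·‖v‖₂ for all K-sparse v and ‖E‖ ≤ ε_A·‖A‖ (operator norms), then with b = Ax ≠ 0: ‖Ex‖₂/‖Ax‖₂ ≤ (ε^{(K)}·κ + ε_A·α·r_K) / (1 - κ·(r_K + s_K/√K)), where α = ‖A‖/√(1-δ). -/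

import Mathlib

open scoped BigOperators

/-- The Euclidean (ℓ₂) norm of a finitely indexed complex vector. -/
noncomputable def l2 {ι : Type*} [Fintype ι] (v : ι → ℂ) : ℝ :=
  Real.sqrt (∑ i, ‖v i‖ ^ 2)

/-- The ℓ₁ norm of a finitely indexed complex vector. -/
noncomputable def l1 {ι : Type*} [Fintype ι] (v : ι → ℂ) : ℝ :=
  ∑ i, ‖v i‖

/-- A vector is `K`-sparse if it has at most `K` nonzero entries. -/
def Sparse {n : ℕ} (K : ℕ) (x : Fin n → ℂ) : Prop :=
  ∃ s : Finset (Fin n), s.card ≤ K ∧ ∀ i ∉ s, x i = 0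

/-- `xK` is a best `K`-term approximation of `x`: it is `K`-sparse, agrees with `x`
on its support, and keeps the largest-magnitude entries. -/
def IsBestKApprox {n : ℕ} (K : ℕ) (x xK : Fin n → ℂ) : Prop :=
  Sparse K xK ∧ (∀ i, xK i ≠ 0 → xK i = x i) ∧
    (∀ i j, xK i ≠ 0 → xK j = 0 → ‖x j‖ ≤ ‖x i‖)

/-!
Split `x = x_K + x_{K^c}`. The RIP lower bound on the `K`-sparse `x_K` and the classical
estimate `‖A v‖₂ ≤ √(1+δ) (‖v‖₂ + ‖v‖₁/√K)` for the tail (obtained by cutting `v` into blocks of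
`K` entries of decreasing size, each bounded in `ℓ₂` by the `ℓ₁` norm of the previous one over
`√K`) give `‖A x‖₂ ≥ √(1-δ) ‖x_K‖₂ (1 - κ (r_K + s_K/√K))`, while the two hypotheses on `E`
give `‖E x‖₂ ≤ √(1-δ) ‖x_K‖₂ (ε^{(K)} κ + ε_A α r_K)`.
-/

open Finset Set Matrix

section Norms

variable {ι : Type*} [Fintype ι]

lemma l2_eq_norm (v : ι → ℂ) : l2 v = ‖WithLp.toLp 2 v‖ := by
  rw [EuclideanSpace.norm_eq]; rfl

lemma l2_nonneg (v : ι → ℂ) : 0 ≤ l2 v := Real.sqrt_nonneg _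

lemma l1_nonneg (v : ι → ℂ) : 0 ≤ l1 v := Finset.sum_nonneg fun _ _ => norm_nonneg _

lemma l2_pos {v : ι → ℂ} (hv : v ≠ 0) : 0 < l2 v := by
  rw [l2_eq_norm, norm_pos_iff]
  exact fun h => hv (congrArg WithLp.ofLp h)

lemma l2_add_le (v w : ι → ℂ) : l2 (v + w) ≤ l2 v + l2 w := by
  simpa only [l2_eq_norm, WithLp.toLp_add] using norm_add_le _ _

lemma l2_sub_le (v w : ι → ℂ) : l2 (v - w) ≤ l2 v + l2 w := by
  simpa only [l2_eq_norm, WithLp.toLp_sub] using norm_sub_le _ _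

lemma l2_indicator_le (s : Set ι) (v : ι → ℂ) : l2 (s.indicator v) ≤ l2 v :=
  Real.sqrt_le_sqrt <| Finset.sum_le_sum fun i _ => by
    rw [norm_indicator_eq_indicator_norm]
    exact pow_le_pow_left₀ (indicator_nonneg (fun j _ => norm_nonneg (v j)) i)
      (indicator_le_self' (fun j _ => norm_nonneg (v j)) i) 2

lemma l1_indicator_add_l1_indicator_compl (s : Set ι) (v : ι → ℂ) :
    l1 (s.indicator v) + l1 (sᶜ.indicator v) = l1 v := by
  simp only [l1, ← Finset.sum_add_distrib, norm_indicator_eq_indicator_norm,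
    indicator_self_add_compl_apply]

lemma l1_indicator_eq_sum (s : Finset ι) (v : ι → ℂ) :
    l1 ((s : Set ι).indicator v) = ∑ i ∈ s, ‖v i‖ := by
  simp only [l1, norm_indicator_eq_indicator_norm]
  exact Finset.sum_indicator_subset _ (Finset.subset_univ s)

lemma l2_indicator_le_sqrt_card_mul (t : Finset ι) {v : ι → ℂ} {M : ℝ} (hM : 0 ≤ M)
    (hvM : ∀ i, ‖v i‖ ≤ M) : l2 ((t : Set ι).indicator v) ≤ √(#t) * M := by
  have hsum : ∑ i, ‖(t : Set ι).indicator v i‖ ^ 2 ≤ #t * M ^ 2 :=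
    calc ∑ i, ‖(t : Set ι).indicator v i‖ ^ 2 = ∑ i ∈ t, ‖v i‖ ^ 2 := by
          rw [← Finset.sum_indicator_subset _ (Finset.subset_univ t)]
          exact Finset.sum_congr rfl fun i _ => by by_cases hi : i ∈ t <;> simp [hi]
      _ ≤ ∑ _i ∈ t, M ^ 2 := Finset.sum_le_sum fun i _ => by gcongr; exact hvM i
      _ = #t * M ^ 2 := by rw [Finset.sum_const, nsmul_eq_mul]
  calc l2 ((t : Set ι).indicator v) ≤ √(#t * M ^ 2) := Real.sqrt_le_sqrt hsum
    _ = √(#t) * M := by rw [Real.sqrt_mul (Nat.cast_nonneg _), Real.sqrt_sq hM]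

/-- The part of `v` outside a set `s` of its largest entries has entries at most their average
`‖v_s‖₁ / #s`. -/
lemma l2_indicator_indicator_compl_le {s t : Finset ι} (hs : s.Nonempty) (ht : #t ≤ #s)
    {v : ι → ℂ} (htop : ∀ i ∈ s, ∀ j ∉ s, ‖v j‖ ≤ ‖v i‖) :
    l2 ((t : Set ι).indicator ((s : Set ι)ᶜ.indicator v)) ≤
      l1 ((s : Set ι).indicator v) / √(#s) := by
  have hcard : (0 : ℝ) < #s := Nat.cast_pos.mpr hs.card_pos
  have hl1 : 0 ≤ l1 ((s : Set ι).indicator v) / #s := div_nonneg (l1_nonneg _) hcard.le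
  have hrest : ∀ j, ‖(s : Set ι)ᶜ.indicator v j‖ ≤ l1 ((s : Set ι).indicator v) / #s := by
    intro j
    by_cases hj : j ∈ s
    · rw [indicator_of_notMem (by simpa using hj), norm_zero]; exact hl1
    · rw [indicator_of_mem (by simpa using hj), le_div_iff₀ hcard, l1_indicator_eq_sum,
        mul_comm, ← nsmul_eq_mul]
      exact Finset.card_nsmul_le_sum _ _ _ fun i hi => htop i hi j hj
  calc l2 ((t : Set ι).indicator ((s : Set ι)ᶜ.indicator v))
      ≤ √(#t) * (l1 ((s : Set ι).indicator v) / #s) :=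
        l2_indicator_le_sqrt_card_mul t hl1 hrest
    _ ≤ √(#s) * (l1 ((s : Set ι).indicator v) / #s) := by gcongr
    _ = l1 ((s : Set ι).indicator v) / √(#s) := by
        rw [mul_div_left_comm, Real.sqrt_div_self', mul_one_div]

end Norms

variable {n K : ℕ}

lemma sparse_indicator {s : Finset (Fin n)} (hs : #s ≤ K) (v : Fin n → ℂ) :
    Sparse K ((s : Set (Fin n)).indicator v) :=
  ⟨s, hs, fun _ hi => indicator_of_notMem (by simpa using hi) v⟩

lemma Finset.exists_subset_card_eq_forall_le {α β : Type*} [DecidableEq α] [LinearOrder β]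
    (f : α → β) (t : Finset α) {k : ℕ} (hk : k ≤ #t) :
    ∃ s ⊆ t, #s = k ∧ ∀ i ∈ s, ∀ j ∈ t \ s, f j ≤ f i := by
  induction k with
  | zero => exact ⟨∅, Finset.empty_subset t, rfl, by simp⟩
  | succ k ih =>
    obtain ⟨s, hst, rfl, hs⟩ := ih (Nat.le_of_succ_le hk)
    have hne : (t \ s).Nonempty := by
      rw [← Finset.card_pos, Finset.card_sdiff_of_subset hst]; omega
    obtain ⟨j₀, hj₀, hj₀max⟩ := Finset.exists_max_image (t \ s) f hne
    have hj₀s : j₀ ∉ s := (Finset.mem_sdiff.mp hj₀).2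
    refine ⟨insert j₀ s, Finset.insert_subset (Finset.mem_sdiff.mp hj₀).1 hst,
      Finset.card_insert_of_notMem hj₀s, fun i hi j hj => ?_⟩
    obtain ⟨hjt, hjs⟩ := Finset.mem_sdiff.mp hj
    rw [Finset.mem_insert, not_or] at hjs
    rcases Finset.mem_insert.mp hi with rfl | hi
    · exact hj₀max j (Finset.mem_sdiff.mpr ⟨hjt, hjs.2⟩)
    · exact hs i hi j (Finset.mem_sdiff.mpr ⟨hjt, hjs.2⟩)

section Shelling

variable {ι : Type*} [Fintype ι] {A : Matrix ι (Fin n) ℂ} {c : ℝ}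

/-- Strong induction on the support: after peeling off the `K` largest entries `v_s` of `v`,
the remainder satisfies the hypothesis with `B = ‖v_s‖₁ / √K`. -/
theorem l2_mulVec_le_of_forall_card_le (hK : 0 < K) (hc : 0 ≤ c)
    (hA : ∀ v, Sparse K v → l2 (A *ᵥ v) ≤ c * l2 v) (v : Fin n → ℂ) {B : ℝ}
    (hB : ∀ s : Finset (Fin n), #s ≤ K → l2 ((s : Set (Fin n)).indicator v) ≤ B) :
    l2 (A *ᵥ v) ≤ c * (B + l1 v / √K) := by
  have hsK : 0 < √(K : ℝ) := Real.sqrt_pos.mpr (Nat.cast_pos.mpr hK)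
  induction hN : #{i | v i ≠ 0} using Nat.strong_induction_on generalizing v B with
  | _ N ih =>
  by_cases hsupp : N ≤ K
  · have hv : ((({i | v i ≠ 0} : Finset (Fin n))) : Set (Fin n)).indicator v = v :=
      indicator_eq_self.mpr fun i hi => by simpa using hi
    have hl1 : 0 ≤ l1 v / √K := div_nonneg (l1_nonneg v) hsK.le
    calc l2 (A *ᵥ v) ≤ c * l2 v := by
          rw [← hv]; exact hA _ (sparse_indicator (hN ▸ hsupp) v)
      _ ≤ c * (B + l1 v / √K) := by
          gcongr; linarith [hv ▸ hB _ (hN ▸ hsupp)]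
  obtain ⟨s, hs, hsK', htop⟩ :=
    Finset.exists_subset_card_eq_forall_le (‖v ·‖) {i | v i ≠ 0} (k := K) (by omega)
  have htop' : ∀ i ∈ s, ∀ j ∉ s, ‖v j‖ ≤ ‖v i‖ := fun i hi j hj => by
    by_cases hvj : v j = 0
    · simp [hvj]
    · exact htop i hi j (by simp [hvj, hj])
  set head := (s : Set (Fin n)).indicator v
  set tail := (s : Set (Fin n))ᶜ.indicator v
  have htail_card : #{i | tail i ≠ 0} < N := by
    have hsub : ({i | tail i ≠ 0} : Finset (Fin n)) ⊆ ({i | v i ≠ 0} : Finset (Fin n)) \ s := by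
      intro i hi
      by_cases his : i ∈ s <;> simp_all [tail]
    have := Finset.card_le_card hsub
    rw [Finset.card_sdiff_of_subset hs, hsK', hN] at this
    omega
  have hhead : l2 (A *ᵥ head) ≤ c * B :=
    (hA _ (sparse_indicator hsK'.le v)).trans (by gcongr; exact hB s hsK'.le)
  have htail_B : ∀ t : Finset (Fin n), #t ≤ K →
      l2 ((t : Set (Fin n)).indicator tail) ≤ l1 head / √K := fun t ht => by
    have hs_ne : s.Nonempty := Finset.card_pos.mp (hsK' ▸ hK)
    simpa only [hsK'] using l2_indicator_indicator_compl_le hs_ne (hsK' ▸ ht) htop'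
  have hsplit : A *ᵥ v = A *ᵥ head + A *ᵥ tail := by
    rw [← Matrix.mulVec_add]; congr 1; ext i; exact (indicator_self_add_compl_apply _ _ i).symm
  calc l2 (A *ᵥ v) ≤ l2 (A *ᵥ head) + l2 (A *ᵥ tail) := hsplit ▸ l2_add_le _ _
    _ ≤ c * B + c * (l1 head / √K + l1 tail / √K) :=
        add_le_add hhead (ih _ htail_card tail htail_B rfl)
    _ = c * (B + l1 v / √K) := by
        rw [← l1_indicator_add_l1_indicator_compl (s : Set (Fin n)) v]; ring

theorem l2_mulVec_le_l2_add_l1_div_sqrt (hK : 0 < K) (hc : 0 ≤ c)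
    (hA : ∀ v, Sparse K v → l2 (A *ᵥ v) ≤ c * l2 v) (v : Fin n → ℂ) :
    l2 (A *ᵥ v) ≤ c * (l2 v + l1 v / √K) :=
  l2_mulVec_le_of_forall_card_le hK hc hA v fun _ _ => l2_indicator_le _ v

end Shelling

lemma sqrt_mul_le_of_mul_sq_le {a x y : ℝ} (hx : 0 ≤ x) (hy : 0 ≤ y) (h : a * x ^ 2 ≤ y ^ 2) :
    √a * x ≤ y := by
  rw [← Real.sqrt_sq hx, ← Real.sqrt_mul' a (sq_nonneg x), ← Real.sqrt_sq hy]
  exact Real.sqrt_le_sqrt h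

lemma le_sqrt_mul_of_sq_le_mul_sq {a x y : ℝ} (hx : 0 ≤ x) (hy : 0 ≤ y) (h : y ^ 2 ≤ a * x ^ 2) :
    y ≤ √a * x := by
  rw [← Real.sqrt_sq hx, ← Real.sqrt_mul' a (sq_nonneg x), ← Real.sqrt_sq hy]
  exact Real.sqrt_le_sqrt h

theorem sqrt_mul_l2_sub_le_l2_mulVec {m : ℕ} (hK : 0 < K) {A : Matrix (Fin m) (Fin n) ℂ} {δ : ℝ}
    (hRIP : ∀ v : Fin n → ℂ, Sparse K v →
      (1 - δ) * l2 v ^ 2 ≤ l2 (A *ᵥ v) ^ 2 ∧ l2 (A *ᵥ v) ^ 2 ≤ (1 + δ) * l2 v ^ 2)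
    (x : Fin n → ℂ) {xK : Fin n → ℂ} (hxK : Sparse K xK) :
    √(1 - δ) * l2 xK - √(1 + δ) * (l2 (x - xK) + l1 (x - xK) / √K) ≤ l2 (A *ᵥ x) := by
  have htail : l2 (A *ᵥ (x - xK)) ≤ √(1 + δ) * (l2 (x - xK) + l1 (x - xK) / √K) :=
    l2_mulVec_le_l2_add_l1_div_sqrt hK (Real.sqrt_nonneg _)
      (fun v hv => le_sqrt_mul_of_sq_le_mul_sq (l2_nonneg v) (l2_nonneg _) (hRIP v hv).2) _
  have hhead : √(1 - δ) * l2 xK ≤ l2 (A *ᵥ xK) :=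
    sqrt_mul_le_of_mul_sq_le (l2_nonneg _) (l2_nonneg _) (hRIP xK hxK).1
  have htri := l2_sub_le (A *ᵥ x) (A *ᵥ (x - xK))
  rw [← Matrix.mulVec_sub, sub_sub_cancel] at htri
  linarith

theorem relative_multiplicative_noise_bound_general {m n K : ℕ} (hK : 0 < K)
    (A E : Matrix (Fin m) (Fin n) ℂ) (δ εK εA nA : ℝ)
    (hδ0 : 0 ≤ δ) (hδ1 : δ < 1)
    (hRIP : ∀ v : Fin n → ℂ, Sparse K v →
      (1 - δ) * l2 v ^ 2 ≤ l2 (A.mulVec v) ^ 2 ∧ l2 (A.mulVec v) ^ 2 ≤ (1 + δ) * l2 v ^ 2)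
    (hEK : ∀ v : Fin n → ℂ, Sparse K v → l2 (E.mulVec v) ≤ εK * Real.sqrt (1 + δ) * l2 v)
    (hEop : ∀ v : Fin n → ℂ, l2 (E.mulVec v) ≤ εA * nA * l2 v)
    (x xK : Fin n → ℂ) (hbest : IsBestKApprox K x xK) (hxK : xK ≠ 0)
    (hcond : l2 (x - xK) / l2 xK + (l1 (x - xK) / l2 xK) / Real.sqrt K
        < 1 / (Real.sqrt (1 + δ) / Real.sqrt (1 - δ))) :
    l2 (E.mulVec x) / l2 (A.mulVec x) ≤
      (εK * (Real.sqrt (1 + δ) / Real.sqrt (1 - δ)) +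
          εA * (nA / Real.sqrt (1 - δ)) * (l2 (x - xK) / l2 xK)) /
        (1 - (Real.sqrt (1 + δ) / Real.sqrt (1 - δ)) *
          (l2 (x - xK) / l2 xK + (l1 (x - xK) / l2 xK) / Real.sqrt K)) := by
  set κ := √(1 + δ) / √(1 - δ)
  set r := l2 (x - xK) / l2 xK
  set t := r + (l1 (x - xK) / l2 xK) / √K
  have hxK_pos : 0 < l2 xK := l2_pos hxK
  have hsδ : 0 < √(1 - δ) := Real.sqrt_pos.mpr (by linarith)
  have hκt : κ * t < 1 := by
    rw [mul_comm, ← lt_div_iff₀ (div_pos (Real.sqrt_pos.mpr (by linarith)) hsδ)]; exact hcond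
  have hscale : 0 < √(1 - δ) * l2 xK := mul_pos hsδ hxK_pos
  have hAx : √(1 - δ) * l2 xK * (1 - κ * t) ≤ l2 (A *ᵥ x) := by
    refine le_of_eq_of_le ?_ (sqrt_mul_l2_sub_le_l2_mulVec hK hRIP x hbest.1)
    simp only [κ, t, r]; field_simp
  have hEx : l2 (E *ᵥ x) ≤ √(1 - δ) * l2 xK * (εK * κ + εA * (nA / √(1 - δ)) * r) := by
    have htri := l2_add_le (E *ᵥ xK) (E *ᵥ (x - xK))
    rw [← Matrix.mulVec_add, add_sub_cancel] at htri
    refine (htri.trans (add_le_add (hEK xK hbest.1) (hEop (x - xK)))).trans_eq ?_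
    simp only [κ, r]; field_simp
  calc l2 (E *ᵥ x) / l2 (A *ᵥ x)
      ≤ √(1 - δ) * l2 xK * (εK * κ + εA * (nA / √(1 - δ)) * r) /
          (√(1 - δ) * l2 xK * (1 - κ * t)) :=
        div_le_div₀ ((l2_nonneg _).trans hEx) hEx (mul_pos hscale (by linarith)) hAx
    _ = _ := mul_div_mul_left _ _ hscale.ne'

/-- bound on the relative multiplicative noise ‖Ex‖₂/‖Ax‖₂.
Here `nA` plays the role of the spectral norm ‖A‖ of `A`. -/
theorem relative_multiplicative_noise_bound {m n K : ℕ} (hK : 0 < K)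
    (A E : Matrix (Fin m) (Fin n) ℂ) (δ εK εA nA : ℝ)
    (hδ0 : 0 ≤ δ) (hδ1 : δ < 1) (hεK : 0 ≤ εK) (hεA : 0 ≤ εA) (hnA : 0 ≤ nA)
    (hRIP : ∀ v : Fin n → ℂ, Sparse K v →
      (1 - δ) * l2 v ^ 2 ≤ l2 (A.mulVec v) ^ 2 ∧ l2 (A.mulVec v) ^ 2 ≤ (1 + δ) * l2 v ^ 2)
    (hAop : ∀ v : Fin n → ℂ, l2 (A.mulVec v) ≤ nA * l2 v)
    (hEK : ∀ v : Fin n → ℂ, Sparse K v → l2 (E.mulVec v) ≤ εK * Real.sqrt (1 + δ) * l2 v)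
    (hEop : ∀ v : Fin n → ℂ, l2 (E.mulVec v) ≤ εA * nA * l2 v)
    (x xK : Fin n → ℂ) (hbest : IsBestKApprox K x xK) (hxK : xK ≠ 0)
    (hcond : l2 (x - xK) / l2 xK + (l1 (x - xK) / l2 xK) / Real.sqrt K
        < 1 / (Real.sqrt (1 + δ) / Real.sqrt (1 - δ))) :
    l2 (E.mulVec x) / l2 (A.mulVec x) ≤
      (εK * (Real.sqrt (1 + δ) / Real.sqrt (1 - δ)) +
          εA * (nA / Real.sqrt (1 - δ)) * (l2 (x - xK) / l2 xK)) /
        (1 - (Real.sqrt (1 + δ) / Real.sqrt (1 - δ)) *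
          (l2 (x - xK) / l2 xK + (l1 (x - xK) / l2 xK) / Real.sqrt K)) :=
  relative_multiplicative_noise_bound_general hK A E δ εK εA nA hδ0 hδ1 hRIP hEK hEop x xK hbest hxK
    hcond
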